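/- arXiv:1709.07923 — 2 statements merged into one kernel-verified Lean document; each statement's English description precedes it below -/
import Mathlib

section
/- Let D be a bounded, open, connected subset of {(ρ,z) ∈ ℝ² : ρ > 0}, let g, h : D → ℝ be given functions, let (ρ₀,z₀) ∈ D, and let (ψ₁,γ₁) and (ψ₂,γ₂) be two pairs of functions, each continuous on the closure of D and twice continuously differentiable on D, satisfying on D the system: −2(ψ_ρρ + ψ_ρ/ρ + ψ_zz) + ψ_ρ² + ψ_z² + γ_ρρ + γ_zz = 0, ψ_ρ² − ψ_z² − γ_ρ/ρ = g, 2ψ_ρψ_z − γ_z/ρ = h, and ψ_ρ² + ψ_z² + γ_ρρ + γ_zz = 0. If ψ₁ = ψ₂ on the boundary ∂D and γ₁(ρ₀,z₀) = γ₂(ρ₀,z₀), then ψ₁ = ψ₂ and γ₁ = γ₂ on all of D. -/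
/-- Partial derivative with respect to the first coordinate `ρ`. -/
noncomputable def dρ (f : ℝ × ℝ → ℝ) (p : ℝ × ℝ) : ℝ := fderiv ℝ f p (1, 0)

/-- Partial derivative with respect to the second coordinate `z`. -/
noncomputable def dz (f : ℝ × ℝ → ℝ) (p : ℝ × ℝ) : ℝ := fderiv ℝ f p (0, 1)

/-- The generalized Einstein vacuum system for the Weyl metric, with source
terms `g`, `h`, holding at the point `p`. -/
noncomputable def WeylSystem (ψ γ g h : ℝ × ℝ → ℝ) (p : ℝ × ℝ) : Prop :=
  -2 * (dρ (dρ ψ) p + dρ ψ p / p.1 + dz (dz ψ) p)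
      + (dρ ψ p) ^ 2 + (dz ψ p) ^ 2 + dρ (dρ γ) p + dz (dz γ) p = 0 ∧
  (dρ ψ p) ^ 2 - (dz ψ p) ^ 2 - dρ γ p / p.1 = g p ∧
  2 * dρ ψ p * dz ψ p - dz γ p / p.1 = h p ∧
  (dρ ψ p) ^ 2 + (dz ψ p) ^ 2 + dρ (dρ γ) p + dz (dz γ) p = 0

/-!
Subtracting the fourth equation of the system from the first shows that each `ψ` solves the
axisymmetric Laplace equation `ψ_ρρ + ψ_ρ / ρ + ψ_zz = 0`. This operator satisfies the weak
maximum principle on bounded domains: adding `ε z²` makes a subsolution strict, and a strict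
subsolution has no interior maximum because there `u_ρ = 0`, `u_ρρ ≤ 0` and `u_zz ≤ 0`. Hence
`ψ₁ - ψ₂`, which vanishes on `∂D`, vanishes on `D`. Then the second and third equations, divided
by `ρ ≠ 0`, give `∇γ₁ = ∇γ₂` on `D`, so on the connected set `D` the difference `γ₁ - γ₂` is the
constant `γ₁(p₀) - γ₂(p₀) = 0`.
-/

open Filter Topology Set

noncomputable def axisLaplacian (u : ℝ × ℝ → ℝ) (p : ℝ × ℝ) : ℝ :=
  dρ (dρ u) p + dρ u p / p.1 + dz (dz u) p

section SecondDerivativeTest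

variable {E : Type*} [NormedAddCommGroup E] [NormedSpace ℝ E] {f : E → ℝ} {x : E}

lemma ContDiffAt.eventually_differentiableAt (hf : ContDiffAt ℝ 2 f x) :
    ∀ᶠ y in 𝓝 x, DifferentiableAt ℝ f y :=
  (hf.eventually (by simp)).mono fun _ hy => hy.differentiableAt (by norm_num)

lemma ContDiffAt.differentiableAt_fderiv_apply (hf : ContDiffAt ℝ 2 f x) (v : E) :
    DifferentiableAt ℝ (fun y => fderiv ℝ f y v) x :=
  ((hf.fderiv_right (m := 1) (by norm_num)).clm_apply contDiffAt_const).differentiableAt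
    (by norm_num)

lemma IsLocalMax.deriv_deriv_nonpos {φ : ℝ → ℝ} {t : ℝ} (hmax : IsLocalMax φ t)
    (hc : ContinuousAt φ t) : deriv (deriv φ) t ≤ 0 := by
  by_contra! hpos
  -- by the second-derivative test `t` is also a local minimum, so `φ` is locally constant
  have hmin := isLocalMin_of_deriv_deriv_pos hpos hmax.deriv_eq_zero hc
  have hconst : φ =ᶠ[𝓝 t] fun _ => φ t :=
    (hmin.and hmax).mono fun _ hs => le_antisymm hs.2 hs.1
  have hd : deriv φ =ᶠ[𝓝 t] fun _ => 0 := hconst.deriv.trans (by simp)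
  rw [hd.deriv_eq, deriv_const] at hpos
  exact hpos.false

lemma IsLocalMax.fderiv_fderiv_apply_nonpos (hf : ContDiffAt ℝ 2 f x) (hmax : IsLocalMax f x)
    (v : E) : fderiv ℝ (fun y => fderiv ℝ f y v) x v ≤ 0 := by
  set ℓ : ℝ → E := fun t => x + t • v
  have hℓ (t : ℝ) : HasDerivAt ℓ v t := by
    simpa [ℓ] using ((hasDerivAt_id t).smul_const v).const_add x
  have hℓ0 : ℓ 0 = x := by simp [ℓ]
  have hℓx : Tendsto ℓ (𝓝 0) (𝓝 x) := hℓ0 ▸ (hℓ 0).continuousAt.tendsto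
  have hderiv : deriv (f ∘ ℓ) =ᶠ[𝓝 0] fun t => fderiv ℝ f (ℓ t) v :=
    (hℓx.eventually hf.eventually_differentiableAt).mono fun t ht =>
      (ht.hasFDerivAt.comp_hasDerivAt t (hℓ t)).deriv
  have hsecond : deriv (deriv (f ∘ ℓ)) 0 = fderiv ℝ (fun y => fderiv ℝ f y v) x v := by
    rw [hderiv.deriv_eq]
    exact ((hf.differentiableAt_fderiv_apply v).hasFDerivAt.comp_hasDerivAt_of_eq 0 (hℓ 0)
      hℓ0.symm).deriv
  have hmaxℓ : IsLocalMax f (ℓ 0) := by rwa [hℓ0]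
  rw [← hsecond]
  exact (hmaxℓ.comp_continuous (hℓ 0).continuousAt).deriv_deriv_nonpos
    (hf.continuousAt.comp_of_eq (hℓ 0).continuousAt hℓ0)

end SecondDerivativeTest

section Derivatives

variable {f g : ℝ × ℝ → ℝ} {p : ℝ × ℝ}

lemma dρ_congr (h : f =ᶠ[𝓝 p] g) : dρ f p = dρ g p := by
  rw [dρ, dρ, h.fderiv_eq]

lemma dz_congr (h : f =ᶠ[𝓝 p] g) : dz f p = dz g p := by
  rw [dz, dz, h.fderiv_eq]

lemma dρ_add (hf : DifferentiableAt ℝ f p) (hg : DifferentiableAt ℝ g p) :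
    dρ (f + g) p = dρ f p + dρ g p := by
  rw [dρ, fderiv_add hf hg]; rfl

lemma dz_add (hf : DifferentiableAt ℝ f p) (hg : DifferentiableAt ℝ g p) :
    dz (f + g) p = dz f p + dz g p := by
  rw [dz, fderiv_add hf hg]; rfl

lemma fderiv_eq_of_dρ_eq_of_dz_eq (hρ : dρ f p = dρ g p) (hz : dz f p = dz g p) :
    fderiv ℝ f p = fderiv ℝ g p := by
  ext
  · exact hρ
  · exact hz

lemma axisLaplacian_add (hf : ContDiffAt ℝ 2 f p) (hg : ContDiffAt ℝ 2 g p) :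
    axisLaplacian (f + g) p = axisLaplacian f p + axisLaplacian g p := by
  have hfg := hf.eventually_differentiableAt.and hg.eventually_differentiableAt
  have hρ : dρ (f + g) =ᶠ[𝓝 p] dρ f + dρ g := hfg.mono fun _ hq => dρ_add hq.1 hq.2
  have hz : dz (f + g) =ᶠ[𝓝 p] dz f + dz g := hfg.mono fun _ hq => dz_add hq.1 hq.2
  rw [axisLaplacian, dρ_congr hρ, dz_congr hz,
    dρ_add (f := dρ f) (g := dρ g) (hf.differentiableAt_fderiv_apply _)
      (hg.differentiableAt_fderiv_apply _),
    dz_add (f := dz f) (g := dz g) (hf.differentiableAt_fderiv_apply _)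
      (hg.differentiableAt_fderiv_apply _),
    dρ_add (hf.differentiableAt (by norm_num)) (hg.differentiableAt (by norm_num)),
    axisLaplacian, axisLaplacian]
  ring

lemma axisLaplacian_sub (hf : ContDiffAt ℝ 2 f p) (hg : ContDiffAt ℝ 2 g p) :
    axisLaplacian (f - g) p = axisLaplacian f p - axisLaplacian g p := by
  rw [eq_sub_iff_add_eq, ← axisLaplacian_add (f := f - g) (hf.sub hg) hg, sub_add_cancel]

lemma IsLocalMax.axisLaplacian_nonpos (hf : ContDiffAt ℝ 2 f p) (hmax : IsLocalMax f p) :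
    axisLaplacian f p ≤ 0 := by
  have hρ : dρ f p = 0 := by simp [dρ, hmax.fderiv_eq_zero]
  rw [axisLaplacian, hρ, zero_div, add_zero]
  exact add_nonpos (hmax.fderiv_fderiv_apply_nonpos hf _) (hmax.fderiv_fderiv_apply_nonpos hf _)

lemma axisLaplacian_comp_snd {φ : ℝ → ℝ} (hφ : Differentiable ℝ φ)
    (hφ' : Differentiable ℝ (deriv φ)) (p : ℝ × ℝ) :
    axisLaplacian (fun q => φ q.2) p = deriv (deriv φ) p.2 := by
  have hasFDerivAt_comp_snd {ϕ : ℝ → ℝ} (hϕ : Differentiable ℝ ϕ) (q : ℝ × ℝ) :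
      HasFDerivAt (fun q : ℝ × ℝ => ϕ q.2) (deriv ϕ q.2 • ContinuousLinearMap.snd ℝ ℝ ℝ) q :=
    (hϕ q.2).hasDerivAt.comp_hasFDerivAt q hasFDerivAt_snd
  have hρ : dρ (fun q => φ q.2) = fun _ => 0 := by
    ext q; simp [dρ, (hasFDerivAt_comp_snd hφ q).fderiv]
  have hz : dz (fun q => φ q.2) = fun q => deriv φ q.2 := by
    ext q; simp [dz, (hasFDerivAt_comp_snd hφ q).fderiv]
  rw [axisLaplacian, hρ, hz]
  simp [dρ, dz, (hasFDerivAt_comp_snd hφ' p).fderiv]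

lemma axisLaplacian_const_mul_snd_sq (ε : ℝ) (p : ℝ × ℝ) :
    axisLaplacian (fun q => ε * q.2 ^ 2) p = 2 * ε := by
  have hφ' : deriv (fun t : ℝ => ε * t ^ 2) = fun t => ε * (2 * t) := by ext t; simp
  have h := axisLaplacian_comp_snd (φ := fun t => ε * t ^ 2) (by fun_prop)
    (by rw [hφ']; fun_prop) p
  rw [hφ'] at h
  simpa [mul_comm] using h

end Derivatives

section MaximumPrinciple

variable {D : Set (ℝ × ℝ)} {u u₁ u₂ : ℝ × ℝ → ℝ}

lemma le_mul_sq_of_axisLaplacian_nonneg (hDo : IsOpen D) (hDb : Bornology.IsBounded D)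
    (hc : ContinuousOn u (closure D)) (h2 : ContDiffOn ℝ 2 u D)
    (hL : ∀ p ∈ D, 0 ≤ axisLaplacian u p) (hb : ∀ p ∈ frontier D, u p ≤ 0)
    {R : ℝ} (hR : ∀ q ∈ closure D, ‖q‖ ≤ R) {ε : ℝ} (hε : 0 < ε) {p : ℝ × ℝ} (hp : p ∈ D) :
    u p ≤ ε * R ^ 2 := by
  -- `u + ε z²` is a strict subsolution, so its maximum over `closure D` lies on the frontier
  set b : ℝ × ℝ → ℝ := fun q => ε * q.2 ^ 2
  obtain ⟨x, hxK, hxmax⟩ := hDb.isCompact_closure.exists_isMaxOn ⟨p, subset_closure hp⟩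
    (hc.add (by fun_prop) : ContinuousOn (u + b) (closure D))
  have hxD : x ∉ D := fun hxD => by
    have hloc : IsLocalMax (u + b) x :=
      hxmax.isLocalMax (mem_of_superset (hDo.mem_nhds hxD) subset_closure)
    have hux : ContDiffAt ℝ 2 u x := h2.contDiffAt (hDo.mem_nhds hxD)
    have hbx : ContDiffAt ℝ 2 b x := by fun_prop
    have := hloc.axisLaplacian_nonpos (f := u + b) (hux.add hbx)
    rw [axisLaplacian_add hux hbx, axisLaplacian_const_mul_snd_sq] at this
    linarith [hL x hxD]
  have hbR : b x ≤ ε * R ^ 2 := by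
    have hx2 : |x.2| ≤ R := (norm_snd_le x).trans (hR x hxK)
    have : x.2 ^ 2 ≤ R ^ 2 := by nlinarith [abs_nonneg x.2, sq_abs x.2]
    exact mul_le_mul_of_nonneg_left this hε.le
  calc u p ≤ u p + b p := le_add_of_nonneg_right (by positivity)
    _ ≤ u x + b x := hxmax (subset_closure hp)
    _ ≤ ε * R ^ 2 := by linarith [hb x ⟨hxK, by rwa [hDo.interior_eq]⟩]

theorem nonpos_of_axisLaplacian_nonneg (hDo : IsOpen D) (hDb : Bornology.IsBounded D)
    (hc : ContinuousOn u (closure D)) (h2 : ContDiffOn ℝ 2 u D)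
    (hL : ∀ p ∈ D, 0 ≤ axisLaplacian u p) (hb : ∀ p ∈ frontier D, u p ≤ 0) :
    ∀ p ∈ D, u p ≤ 0 := by
  obtain ⟨R, hR0, hR⟩ := hDb.closure.exists_pos_norm_le
  intro p hp
  refine forall_gt_imp_ge_iff_le_of_dense.mp fun δ hδ => ?_
  simpa [div_mul_cancel₀ δ (pow_pos hR0 2).ne'] using
    le_mul_sq_of_axisLaplacian_nonneg hDo hDb hc h2 hL hb hR (div_pos hδ (pow_pos hR0 2)) hp

theorem le_of_axisLaplacian_le (hDo : IsOpen D) (hDb : Bornology.IsBounded D)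
    (hc₁ : ContinuousOn u₁ (closure D)) (hc₂ : ContinuousOn u₂ (closure D))
    (h₁ : ContDiffOn ℝ 2 u₁ D) (h₂ : ContDiffOn ℝ 2 u₂ D)
    (hL : ∀ p ∈ D, axisLaplacian u₂ p ≤ axisLaplacian u₁ p)
    (hb : ∀ p ∈ frontier D, u₁ p ≤ u₂ p) : ∀ p ∈ D, u₁ p ≤ u₂ p := by
  have hL' (p : ℝ × ℝ) (hp : p ∈ D) : 0 ≤ axisLaplacian (u₁ - u₂) p := by
    rw [axisLaplacian_sub (h₁.contDiffAt (hDo.mem_nhds hp)) (h₂.contDiffAt (hDo.mem_nhds hp)),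
      sub_nonneg]
    exact hL p hp
  simpa [sub_nonpos] using nonpos_of_axisLaplacian_nonneg hDo hDb (hc₁.sub hc₂) (h₁.sub h₂) hL'
    (fun p hp => sub_nonpos.2 (hb p hp))

theorem eqOn_of_axisLaplacian_eq (hDo : IsOpen D) (hDb : Bornology.IsBounded D)
    (hc₁ : ContinuousOn u₁ (closure D)) (hc₂ : ContinuousOn u₂ (closure D))
    (h₁ : ContDiffOn ℝ 2 u₁ D) (h₂ : ContDiffOn ℝ 2 u₂ D)
    (hL : ∀ p ∈ D, axisLaplacian u₁ p = axisLaplacian u₂ p) (hb : EqOn u₁ u₂ (frontier D)) :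
    EqOn u₁ u₂ D := fun p hp =>
  le_antisymm
    (le_of_axisLaplacian_le hDo hDb hc₁ hc₂ h₁ h₂ (fun q hq => (hL q hq).ge)
      (fun _ hq => (hb hq).le) p hp)
    (le_of_axisLaplacian_le hDo hDb hc₂ hc₁ h₂ h₁ (fun q hq => (hL q hq).le)
      (fun _ hq => (hb hq).ge) p hp)

end MaximumPrinciple

section WeylSystem

variable {ψ γ ψ₁ γ₁ ψ₂ γ₂ g h : ℝ × ℝ → ℝ} {p : ℝ × ℝ}

lemma WeylSystem.axisLaplacian_eq_zero (hs : WeylSystem ψ γ g h p) : axisLaplacian ψ p = 0 := by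
  obtain ⟨h₁, -, -, h₄⟩ := hs
  rw [axisLaplacian]
  linarith

lemma WeylSystem.fderiv_eq_of_eventuallyEq (hs₁ : WeylSystem ψ₁ γ₁ g h p)
    (hs₂ : WeylSystem ψ₂ γ₂ g h p) (hp : p.1 ≠ 0) (hψ : ψ₁ =ᶠ[𝓝 p] ψ₂) :
    fderiv ℝ γ₁ p = fderiv ℝ γ₂ p := by
  obtain ⟨-, hg₁, hh₁, -⟩ := hs₁
  obtain ⟨-, hg₂, hh₂, -⟩ := hs₂
  rw [dρ_congr hψ, dz_congr hψ] at hg₁ hh₁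
  exact fderiv_eq_of_dρ_eq_of_dz_eq ((div_left_inj' hp).1 (by linarith))
    ((div_left_inj' hp).1 (by linarith))

end WeylSystem

theorem uniqueness_weyl_system_general
    (D : Set (ℝ × ℝ)) (hDhalf : D ⊆ {p : ℝ × ℝ | 0 < p.1})
    (hDo : IsOpen D) (hDb : Bornology.IsBounded D) (hDconn : IsConnected D)
    (g h : ℝ × ℝ → ℝ) (p₀ : ℝ × ℝ) (hp₀ : p₀ ∈ D)
    (ψ₁ γ₁ ψ₂ γ₂ : ℝ × ℝ → ℝ)
    (hcψ₁ : ContinuousOn ψ₁ (closure D))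
    (hcψ₂ : ContinuousOn ψ₂ (closure D))
    (h2ψ₁ : ContDiffOn ℝ 2 ψ₁ D) (h2γ₁ : ContDiffOn ℝ 2 γ₁ D)
    (h2ψ₂ : ContDiffOn ℝ 2 ψ₂ D) (h2γ₂ : ContDiffOn ℝ 2 γ₂ D)
    (hsys₁ : ∀ p ∈ D, WeylSystem ψ₁ γ₁ g h p)
    (hsys₂ : ∀ p ∈ D, WeylSystem ψ₂ γ₂ g h p)
    (hbdry : ∀ p ∈ frontier D, ψ₁ p = ψ₂ p)
    (hpoint : γ₁ p₀ = γ₂ p₀) :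
    (∀ p ∈ D, ψ₁ p = ψ₂ p) ∧ (∀ p ∈ D, γ₁ p = γ₂ p) := by
  have hψ : EqOn ψ₁ ψ₂ D :=
    eqOn_of_axisLaplacian_eq hDo hDb hcψ₁ hcψ₂ h2ψ₁ h2ψ₂
      (fun p hp => by
        rw [(hsys₁ p hp).axisLaplacian_eq_zero, (hsys₂ p hp).axisLaplacian_eq_zero])
      hbdry
  have hγ' (p : ℝ × ℝ) (hp : p ∈ D) : fderiv ℝ γ₁ p = fderiv ℝ γ₂ p :=
    (hsys₁ p hp).fderiv_eq_of_eventuallyEq (hsys₂ p hp) (hDhalf hp).ne'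
      (eventually_of_mem (hDo.mem_nhds hp) hψ)
  exact ⟨hψ, hDo.eqOn_of_fderiv_eq hDconn.isPreconnected
    (h2γ₁.differentiableOn (by norm_num)) (h2γ₂.differentiableOn (by norm_num)) hγ' hp₀ hpoint⟩

theorem uniqueness_weyl_system
    (D : Set (ℝ × ℝ)) (hDhalf : D ⊆ {p : ℝ × ℝ | 0 < p.1})
    (hDo : IsOpen D) (hDb : Bornology.IsBounded D) (hDconn : IsConnected D)
    (g h : ℝ × ℝ → ℝ) (p₀ : ℝ × ℝ) (hp₀ : p₀ ∈ D)
    (ψ₁ γ₁ ψ₂ γ₂ : ℝ × ℝ → ℝ)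
    (hcψ₁ : ContinuousOn ψ₁ (closure D)) (hcγ₁ : ContinuousOn γ₁ (closure D))
    (hcψ₂ : ContinuousOn ψ₂ (closure D)) (hcγ₂ : ContinuousOn γ₂ (closure D))
    (h2ψ₁ : ContDiffOn ℝ 2 ψ₁ D) (h2γ₁ : ContDiffOn ℝ 2 γ₁ D)
    (h2ψ₂ : ContDiffOn ℝ 2 ψ₂ D) (h2γ₂ : ContDiffOn ℝ 2 γ₂ D)
    (hsys₁ : ∀ p ∈ D, WeylSystem ψ₁ γ₁ g h p)
    (hsys₂ : ∀ p ∈ D, WeylSystem ψ₂ γ₂ g h p)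
    (hbdry : ∀ p ∈ frontier D, ψ₁ p = ψ₂ p)
    (hpoint : γ₁ p₀ = γ₂ p₀) :
    (∀ p ∈ D, ψ₁ p = ψ₂ p) ∧ (∀ p ∈ D, γ₁ p = γ₂ p) :=
  uniqueness_weyl_system_general D hDhalf hDo hDb hDconn g h p₀ hp₀ ψ₁ γ₁ ψ₂ γ₂ hcψ₁ hcψ₂ h2ψ₁ h2γ₁
    h2ψ₂ h2γ₂ hsys₁ hsys₂ hbdry hpoint
end

section
/- Let D be an open subset of {(ρ,z) ∈ ℝ² : ρ > 0}, let K and ε be real numbers, and let ψ, γ : D → ℝ be twice continuously differentiable functions satisfying on D the equations γ_ρ = ρ(ψ_ρ² − ψ_z²), γ_z = 2ρψ_ρψ_z, and −2(ψ_ρρ + ψ_ρ/ρ + ψ_zz) = K ε e^{2γ−2ψ}. Then K ε ψ_z = 0 at every point of D; in particular, if Kε ≠ 0 then ψ_z vanishes identically on D. -/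
open Filter Topology

section SecondDerivative

variable {𝕜 E F : Type*} [RCLike 𝕜] [NormedAddCommGroup E] [NormedSpace 𝕜 E]
  [NormedAddCommGroup F] [NormedSpace 𝕜 F] {f : E → F} {x : E}

theorem ContDiffAt.differentiableAt_fderiv (hf : ContDiffAt 𝕜 2 f x) :
    DifferentiableAt 𝕜 (fderiv 𝕜 f) x :=
  (hf.fderiv_right one_add_one_eq_two.le).differentiableAt one_ne_zero

theorem ContDiffAt.fderiv_fderiv_apply_comm (hf : ContDiffAt 𝕜 2 f x) (v w : E) :
    fderiv 𝕜 (fun y => fderiv 𝕜 f y v) x w = fderiv 𝕜 (fun y => fderiv 𝕜 f y w) x v := by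
  rw [fderiv_clm_apply hf.differentiableAt_fderiv (differentiableAt_const v),
    fderiv_clm_apply hf.differentiableAt_fderiv (differentiableAt_const w)]
  simpa using hf.isSymmSndFDerivAt (by simp [minSmoothness_of_isRCLikeNormedField]) w v

end SecondDerivative

section PartialDerivatives

variable {f g : ℝ × ℝ → ℝ} {q : ℝ × ℝ}

theorem ContDiffAt.differentiableAt_dρ (hf : ContDiffAt ℝ 2 f q) :
    DifferentiableAt ℝ (dρ f) q :=
  hf.differentiableAt_fderiv.clm_apply (differentiableAt_const _)

theorem ContDiffAt.differentiableAt_dz (hf : ContDiffAt ℝ 2 f q) :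
    DifferentiableAt ℝ (dz f) q :=
  hf.differentiableAt_fderiv.clm_apply (differentiableAt_const _)

theorem ContDiffAt.dz_dρ (hf : ContDiffAt ℝ 2 f q) : dz (dρ f) q = dρ (dz f) q :=
  hf.fderiv_fderiv_apply_comm _ _

theorem Filter.EventuallyEq.dz_eq (h : f =ᶠ[𝓝 q] g) : dz f q = dz g q := by
  rw [dz, dz, h.fderiv_eq]

theorem Filter.EventuallyEq.dρ_eq (h : f =ᶠ[𝓝 q] g) : dρ f q = dρ g q := by
  rw [dρ, dρ, h.fderiv_eq]

theorem dz_fst_mul_sq_sub_sq (hf : DifferentiableAt ℝ f q) (hg : DifferentiableAt ℝ g q) :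
    dz (fun p => p.1 * (f p ^ 2 - g p ^ 2)) q
      = q.1 * (2 * f q * dz f q - 2 * g q * dz g q) := by
  have h : HasFDerivAt (fun p => p.1 * (f p ^ 2 - g p ^ 2)) _ q :=
    hasFDerivAt_fst.mul ((hf.hasFDerivAt.pow 2).sub (hg.hasFDerivAt.pow 2))
  rw [dz, h.fderiv]
  simp [dz]

theorem dρ_two_mul_fst_mul_mul (hf : DifferentiableAt ℝ f q) (hg : DifferentiableAt ℝ g q) :
    dρ (fun p => 2 * p.1 * f p * g p) q
      = 2 * f q * g q + 2 * q.1 * (dρ f q * g q + f q * dρ g q) := by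
  have h : HasFDerivAt (fun p => 2 * p.1 * f p * g p) _ q :=
    ((hasFDerivAt_fst.const_mul 2).mul hf.hasFDerivAt).mul hg.hasFDerivAt
  rw [dρ, h.fderiv]
  simp only [Pi.mul_apply, smul_add, add_apply, smul_apply,
    smul_eq_mul, ContinuousLinearMap.coe_fst', mul_one, dρ]
  ring

end PartialDerivatives

noncomputable def axisymLaplacian (ψ : ℝ × ℝ → ℝ) (q : ℝ × ℝ) : ℝ :=
  dρ (dρ ψ) q + dρ ψ q / q.1 + dz (dz ψ) q

theorem dz_mul_axisymLaplacian_eq_zero {ψ γ : ℝ × ℝ → ℝ} {q : ℝ × ℝ} (hq : q.1 ≠ 0)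
    (hψ : ContDiffAt ℝ 2 ψ q) (hγ : ContDiffAt ℝ 2 γ q)
    (hγρ : dρ γ =ᶠ[𝓝 q] fun p => p.1 * (dρ ψ p ^ 2 - dz ψ p ^ 2))
    (hγz : dz γ =ᶠ[𝓝 q] fun p => 2 * p.1 * dρ ψ p * dz ψ p) :
    dz ψ q * axisymLaplacian ψ q = 0 := by
  have hmixed := hγ.dz_dρ
  rw [hγρ.dz_eq, hγz.dρ_eq,
    dz_fst_mul_sq_sub_sq hψ.differentiableAt_dρ hψ.differentiableAt_dz,
    dρ_two_mul_fst_mul_mul hψ.differentiableAt_dρ hψ.differentiableAt_dz, hψ.dz_dρ] at hmixed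
  unfold axisymLaplacian
  field_simp
  linear_combination (-1 / 2 : ℝ) * hmixed

theorem integrability_obstruction
    (D : Set (ℝ × ℝ)) (hDhalf : D ⊆ {p : ℝ × ℝ | 0 < p.1}) (hDo : IsOpen D)
    (K ε : ℝ) (ψ γ : ℝ × ℝ → ℝ)
    (hψ : ContDiffOn ℝ 2 ψ D) (hγ : ContDiffOn ℝ 2 γ D)
    (hγρ : ∀ q ∈ D, dρ γ q = q.1 * ((dρ ψ q) ^ 2 - (dz ψ q) ^ 2))
    (hγz : ∀ q ∈ D, dz γ q = 2 * q.1 * dρ ψ q * dz ψ q)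
    (heq : ∀ q ∈ D, -2 * (dρ (dρ ψ) q + dρ ψ q / q.1 + dz (dz ψ) q)
      = K * ε * Real.exp (2 * γ q - 2 * ψ q)) :
    (∀ q ∈ D, K * ε * dz ψ q = 0) ∧ (K * ε ≠ 0 → ∀ q ∈ D, dz ψ q = 0) := by
  have hKε : ∀ q ∈ D, K * ε * dz ψ q = 0 := by
    intro q hq
    have hD : D ∈ 𝓝 q := hDo.mem_nhds hq
    have hlap := dz_mul_axisymLaplacian_eq_zero (hDhalf hq).ne' (hψ.contDiffAt hD)
      (hγ.contDiffAt hD) (eventually_of_mem hD hγρ) (eventually_of_mem hD hγz)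
    have hsource : K * ε * dz ψ q * Real.exp (2 * γ q - 2 * ψ q) = 0 := by
      rw [axisymLaplacian] at hlap
      linear_combination (-2 : ℝ) * hlap - dz ψ q * heq q hq
    exact (mul_eq_zero.mp hsource).resolve_right (Real.exp_ne_zero _)
  exact ⟨hKε, fun hne q hq => (mul_eq_zero.mp (hKε q hq)).resolve_left hne⟩
end
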